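/- Let F be a null 2-form on Minkowski space with fundamental vector ℓ (the future-pointing null vector with F(F(x)) = −η(ℓ,x)ℓ for all x). Then there exists a spacelike unit vector e₂ with η(ℓ,e₂) = 0 such that F = ℓ ∧ e₂; moreover, any vector e₂′ with η(e₂′,e₂′) = 1, η(ℓ,e₂′) = 0 and F = ℓ ∧ e₂′ satisfies e₂′ = e₂ + ζ·ℓ for some ζ ∈ ℝ. -/

import Mathlib

open Matrix BigOperators

noncomputable section

/-- Minkowski space: ℝ⁴. -/
abbrev V4 : Type := Fin 4 → ℝ

/-- The signature signs of η = diag(−1,1,1,1). -/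
def etaSgn (i : Fin 4) : ℝ := if i = 0 then -1 else 1

/-- The Lorentzian bilinear form η(x,y) = −x⁰y⁰ + x¹y¹ + x²y² + x³y³. -/
def etaB (x y : V4) : ℝ := ∑ i, etaSgn i * x i * y i

/-- Action of a 2-form on a vector: F(x)^α = η^{αμ} F_{μν} x^ν. -/
def act (F : Matrix (Fin 4) (Fin 4) ℝ) (x : V4) : V4 :=
  fun a => etaSgn a * ∑ b, F a b * x b

/-- The product of 2-forms: (F,G) = ½ F_{αβ} G^{αβ}. -/
def formInner (F G : Matrix (Fin 4) (Fin 4) ℝ) : ℝ :=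
  (1 / 2) * ∑ a, ∑ b, etaSgn a * etaSgn b * F a b * G a b

/-- The Levi-Civita symbol on four indices, with ε₀₁₂₃ = 1. -/
def eps (a b c d : Fin 4) : ℝ :=
  Matrix.det (Matrix.of fun i j => if ![a, b, c, d] i = j then (1 : ℝ) else 0)

/-- The Hodge dual: (*F)_{αβ} = ½ ε_{αβμν} F^{μν}. -/
def hodge (F : Matrix (Fin 4) (Fin 4) ℝ) : Matrix (Fin 4) (Fin 4) ℝ :=
  Matrix.of fun a b => (1 / 2) * ∑ m, ∑ n, eps a b m n * (etaSgn m * etaSgn n * F m n)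

/-- Exterior product of vectors: (u∧v)_{αβ} = u_α v_β − u_β v_α, with indices lowered by η. -/
def wedge (u v : V4) : Matrix (Fin 4) (Fin 4) ℝ :=
  Matrix.of fun a b => (etaSgn a * u a) * (etaSgn b * v b) - (etaSgn b * u b) * (etaSgn a * v a)

/-- A null 2-form: a nonzero antisymmetric matrix F with (F,F) = 0 and (*F,F) = 0. -/
def IsNullForm (F : Matrix (Fin 4) (Fin 4) ℝ) : Prop :=
  Fᵀ = -F ∧ F ≠ 0 ∧ formInner F F = 0 ∧ formInner (hodge F) F = 0

/-- A t-volume: an antisymmetric matrix U with (U,U) = −1 and (*U,U) = 0. -/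
def IsTVolume (U : Matrix (Fin 4) (Fin 4) ℝ) : Prop :=
  Uᵀ = -U ∧ formInner U U = -1 ∧ formInner (hodge U) U = 0

/-!
With respect to `η` the 2-form `F` is antisymmetric, and `F² x = -η(ℓ,x) ℓ`; together these
give `F ℓ = 0`, `η(ℓ, F x) = 0` and `η(F x, F x) = η(ℓ,x)²`. Fix `t` with `η(ℓ,t) = -1` and put
`e₂ = F t`, a unit vector orthogonal to `ℓ`. For `y ⟂ ℓ`, `F y` is a null vector orthogonal to
the null vector `ℓ`, hence a multiple of `ℓ`, namely `η(e₂,y) ℓ`; splitting an arbitrary `y`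
along `t` gives `F y = η(e₂,y) ℓ - η(ℓ,y) e₂`, i.e. `F = ℓ ∧ e₂`. Evaluating
`ℓ ∧ e₂ = ℓ ∧ e₂'` at `t` shows `e₂' - e₂ ∈ ℝ ℓ`.
-/

lemma etaSgn_mul_self (a : Fin 4) : etaSgn a * etaSgn a = 1 := by
  unfold etaSgn; split_ifs <;> norm_num

lemma etaB_comm (x y : V4) : etaB x y = etaB y x := by
  simp only [etaB, mul_right_comm]

lemma etaB_add_right (x y z : V4) : etaB x (y + z) = etaB x y + etaB x z := by
  simp only [etaB, Pi.add_apply, mul_add, Finset.sum_add_distrib]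

lemma etaB_smul_right (x y : V4) (c : ℝ) : etaB x (c • y) = c * etaB x y := by
  simp only [etaB, Pi.smul_apply, smul_eq_mul, Finset.mul_sum]
  exact Finset.sum_congr rfl fun _ _ => by ring

lemma etaB_smul_left (x y : V4) (c : ℝ) : etaB (c • x) y = c * etaB x y := by
  rw [etaB_comm, etaB_smul_right, etaB_comm]

lemma etaB_eq_coord (x y : V4) :
    etaB x y = -(x 0 * y 0) + x 1 * y 1 + x 2 * y 2 + x 3 * y 3 := by
  simp [etaB, Fin.sum_univ_four, etaSgn]

lemma etaB_single_zero (x : V4) : etaB x (Pi.single 0 1) = -x 0 := by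
  simp [etaB, Pi.single_apply, etaSgn]

lemma exists_etaB_eq_neg_one {ℓ : V4} (hℓ0 : ℓ 0 ≠ 0) : ∃ t : V4, etaB ℓ t = -1 :=
  ⟨(ℓ 0)⁻¹ • Pi.single 0 1, by rw [etaB_smul_right, etaB_single_zero, mul_neg, inv_mul_cancel₀ hℓ0]⟩

lemma eq_zero_of_etaB_self_eq_zero {w : V4} (hw0 : w 0 = 0) (hw : etaB w w = 0) : w = 0 := by
  rw [etaB_eq_coord, hw0] at hw
  funext i
  fin_cases i <;>
    simp only [Fin.zero_eta, Fin.mk_one, Fin.reduceFinMk, Fin.isValue, hw0, Pi.zero_apply] <;>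
    nlinarith [sq_nonneg (w 1), sq_nonneg (w 2), sq_nonneg (w 3)]

lemma eq_smul_of_etaB_eq_zero {ℓ v : V4} (hℓ : etaB ℓ ℓ = 0) (hℓ0 : ℓ 0 ≠ 0)
    (hv : etaB v v = 0) (hℓv : etaB ℓ v = 0) : v = (v 0 / ℓ 0) • ℓ := by
  -- `w = ℓ₀ v - v₀ ℓ` has no time component and
  -- `η(w,w) = ℓ₀² η(v,v) - 2 ℓ₀ v₀ η(ℓ,v) + v₀² η(ℓ,ℓ) = 0`
  have hw := eq_zero_of_etaB_self_eq_zero (w := ℓ 0 • v - v 0 • ℓ)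
    (by simp only [Pi.sub_apply, Pi.smul_apply, smul_eq_mul]; ring)
    (by rw [etaB_eq_coord] at hℓ hv hℓv ⊢
        simp only [Pi.sub_apply, Pi.smul_apply, smul_eq_mul]
        linear_combination ℓ 0 ^ 2 * hv - 2 * ℓ 0 * v 0 * hℓv + v 0 ^ 2 * hℓ)
  rw [sub_eq_zero] at hw
  rw [div_eq_inv_mul, mul_smul, ← hw, inv_smul_smul₀ hℓ0]

lemma act_add (F : Matrix (Fin 4) (Fin 4) ℝ) (x y : V4) : act F (x + y) = act F x + act F y := by
  ext a
  simp only [act, Pi.add_apply, mul_add, Finset.sum_add_distrib]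

lemma act_smul (F : Matrix (Fin 4) (Fin 4) ℝ) (c : ℝ) (x : V4) : act F (c • x) = c • act F x := by
  ext a
  simp only [act, Pi.smul_apply, smul_eq_mul, Finset.mul_sum]
  exact Finset.sum_congr rfl fun _ _ => by ring

lemma act_single (F : Matrix (Fin 4) (Fin 4) ℝ) (a b : Fin 4) :
    act F (Pi.single b 1) a = etaSgn a * F a b := by
  simp [act, Pi.single_apply]

lemma act_injective : Function.Injective act := by
  intro F G h
  ext a b
  have hab := congrFun (congrFun h (Pi.single b 1)) a
  rw [act_single, act_single] at hab
  exact mul_left_cancel₀ (left_ne_zero_of_mul_eq_one (etaSgn_mul_self a)) hab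

lemma act_wedge (u v y : V4) : act (wedge u v) y = etaB v y • u - etaB u y • v := by
  ext a
  have hsq := etaSgn_mul_self a
  simp only [act, wedge, etaB, Matrix.of_apply, Pi.sub_apply, Pi.smul_apply, smul_eq_mul,
    sub_mul, mul_sub, Finset.sum_sub_distrib, Finset.sum_mul, Finset.mul_sum]
  congr 1 <;> refine Finset.sum_congr rfl fun b _ => ?_
  · linear_combination etaSgn b * v b * y b * u a * hsq
  · linear_combination etaSgn b * u b * y b * v a * hsq

lemma etaB_act_left {F : Matrix (Fin 4) (Fin 4) ℝ} (hF : Fᵀ = -F) (x y : V4) :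
    etaB (act F x) y = -etaB x (act F y) := by
  have hanti (a b : Fin 4) : F b a = -F a b := by simpa using congrFun (congrFun hF a) b
  have hl : etaB (act F x) y = ∑ a, ∑ b, F a b * x b * y a := by
    simp only [etaB, act, Finset.mul_sum, Finset.sum_mul]
    refine Finset.sum_congr rfl fun a _ => Finset.sum_congr rfl fun b _ => ?_
    linear_combination F a b * x b * y a * etaSgn_mul_self a
  have hr : etaB x (act F y) = ∑ a, ∑ b, F a b * x a * y b := by
    simp only [etaB, act, Finset.mul_sum]
    refine Finset.sum_congr rfl fun a _ => Finset.sum_congr rfl fun b _ => ?_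
    linear_combination F a b * x a * y b * etaSgn_mul_self a
  rw [hl, hr, Finset.sum_comm, ← Finset.sum_neg_distrib]
  refine Finset.sum_congr rfl fun a _ => ?_
  rw [← Finset.sum_neg_distrib]
  refine Finset.sum_congr rfl fun b _ => ?_
  rw [hanti]
  ring

lemma etaB_act_self {F : Matrix (Fin 4) (Fin 4) ℝ} (hF : Fᵀ = -F) (x : V4) :
    etaB (act F x) x = 0 := by
  have h := etaB_act_left hF x x
  rw [etaB_comm x] at h
  linarith

lemma exists_eq_add_smul_of_wedge_eq {u v v' t : V4} (ht : etaB u t = -1)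
    (h : wedge u v = wedge u v') : ∃ ζ : ℝ, v' = v + ζ • u := by
  have hvt := congrArg (fun G => act G t) h
  simp only [act_wedge, ht] at hvt
  exact ⟨etaB v t - etaB v' t, by linear_combination (norm := module) -hvt⟩

section Fundamental

variable {F : Matrix (Fin 4) (Fin 4) ℝ} {ℓ t : V4} (hF : Fᵀ = -F)
  (hfund : ∀ x : V4, act F (act F x) = (-(etaB ℓ x)) • ℓ) (ht : etaB ℓ t = -1)
include hF hfund

lemma etaB_act_act (x : V4) : etaB (act F x) (act F x) = etaB ℓ x ^ 2 := by
  rw [etaB_act_left hF, hfund, etaB_smul_right, etaB_comm x]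
  ring

include ht

lemma act_fundamental_eq_zero : act F ℓ = 0 := by
  -- `ℓ = F (F t)`, so `F ℓ = F² (F t)` is a multiple `c ℓ`, and antisymmetry forces `c = -c`
  have hFℓ : act F ℓ = (-etaB ℓ (act F t)) • ℓ := by
    rw [← hfund, hfund t, ht, neg_neg, one_smul]
  have hc : -etaB ℓ (act F t) = -etaB ℓ (act F t) * -1 := by
    rw [← ht, ← etaB_smul_left, ← hFℓ, etaB_act_left hF, etaB_comm]
  rw [hFℓ, show -etaB ℓ (act F t) = 0 by linarith, zero_smul]

lemma etaB_fundamental_act (x : V4) : etaB ℓ (act F x) = 0 := by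
  have h := etaB_act_left hF ℓ x
  rw [act_fundamental_eq_zero hF hfund ht] at h
  simpa [etaB] using h.symm

lemma act_eq_smul_of_etaB_eq_zero (hℓ : etaB ℓ ℓ = 0) (hℓ0 : ℓ 0 ≠ 0) {y : V4}
    (hy : etaB ℓ y = 0) : act F y = etaB (act F t) y • ℓ := by
  have hpar := eq_smul_of_etaB_eq_zero hℓ hℓ0 (by rw [etaB_act_act hF hfund, hy]; ring)
    (etaB_fundamental_act hF hfund ht y)
  set c := act F y 0 / ℓ 0
  have hc : c = etaB (act F t) y := by
    have h := etaB_act_left hF y t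
    rw [hpar, etaB_smul_left, ht, etaB_comm y] at h
    linarith
  rw [hpar, hc]

lemma eq_wedge_act (hℓ : etaB ℓ ℓ = 0) (hℓ0 : ℓ 0 ≠ 0) : F = wedge ℓ (act F t) := by
  apply act_injective
  funext y
  rw [act_wedge]
  have hy : etaB ℓ (y + etaB ℓ y • t) = 0 := by
    rw [etaB_add_right, etaB_smul_right, ht]
    ring
  have h := act_eq_smul_of_etaB_eq_zero hF hfund ht hℓ hℓ0 hy
  rw [act_add, act_smul, etaB_add_right, etaB_smul_right,
    etaB_act_self hF, mul_zero, add_zero] at h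
  exact eq_sub_of_add_eq h

end Fundamental

/-- A null 2-form F with fundamental vector ℓ can be written as
F = ℓ ∧ e₂ with e₂ a spacelike unit vector orthogonal to ℓ, unique up to
e₂ ↦ e₂ + ζ·ℓ. -/
theorem nullForm_canonical_wedge (F : Matrix (Fin 4) (Fin 4) ℝ) (hF : IsNullForm F)
    (ℓ : V4) (hℓnull : etaB ℓ ℓ = 0) (hℓfut : 0 < ℓ 0)
    (hfund : ∀ x : V4, act F (act F x) = (-(etaB ℓ x)) • ℓ) :
    ∃ e₂ : V4, etaB e₂ e₂ = 1 ∧ etaB ℓ e₂ = 0 ∧ F = wedge ℓ e₂ ∧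
      ∀ e₂' : V4, etaB e₂' e₂' = 1 → etaB ℓ e₂' = 0 → F = wedge ℓ e₂' →
        ∃ ζ : ℝ, e₂' = e₂ + ζ • ℓ := by
  obtain ⟨t, ht⟩ := exists_etaB_eq_neg_one hℓfut.ne'
  have hwedge := eq_wedge_act hF.1 hfund ht hℓnull hℓfut.ne'
  refine ⟨act F t, ?_, etaB_fundamental_act hF.1 hfund ht t, hwedge,
    fun e₂' _ _ he₂' => exists_eq_add_smul_of_wedge_eq ht (hwedge.symm.trans he₂')⟩
  rw [etaB_act_act hF.1 hfund, ht]
  norm_num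

end
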